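/- Let β < -1 and 0 < γ < 1, and u₂(k) = ∫₀^{γ} t^{k-1} ((γ-t)/(1-t))^{-β} dt. Then there exist constants 0 < c₁ ≤ c₂ such that c₁ γ^k k^{-1+β} ≤ u₂(k) ≤ c₂ γ^k k^{-1+β} for all integers k ≥ 1. -/

import Mathlib

/-!
Write `a = -β`. Since `1 - γ ≤ 1 - t ≤ 1` on `[0, γ]`, the integral lies between
`∫₀^γ t^(k-1) (γ - t)^a dt = γ^(k+a) ∫₀¹ s^(k-1) (1 - s)^a ds` and `(1 - γ)^(-a)` times it.
The Beta integral is of order `k^(-(a+1))`: from below, restrict it to `[1 - 1/k, 1]`,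
where `s^(k-1) ≥ e⁻¹`; from above, use `s^(k-1) ≤ e · exp(-k (1 - s))` and compare with
the Gamma integral `∫₀^∞ u^a e^(-k u) du = Γ(a+1) k^(-(a+1))`.
-/

open MeasureTheory Set Real

lemma exp_neg_one_le_one_sub_inv_pow (n : ℕ) : exp (-1) ≤ (1 - ((n : ℝ) + 1)⁻¹) ^ n := by
  rcases n.eq_zero_or_pos with rfl | hn
  · simp
  have hn' : (0 : ℝ) < n := by exact_mod_cast hn
  have h : 1 - ((n : ℝ) + 1)⁻¹ = (1 + (n : ℝ)⁻¹)⁻¹ := by field_simp; ring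
  rw [h, inv_pow, exp_neg]
  exact inv_anti₀ (by positivity) one_add_inv_pow_le_exp

lemma pow_le_exp_one_mul_exp_neg (n : ℕ) {s : ℝ} (hs : 0 ≤ s) :
    s ^ n ≤ exp 1 * exp (-((n + 1) * (1 - s))) := by
  have hs_le : s ≤ exp (s - 1) := by linarith [add_one_le_exp (s - 1)]
  calc s ^ n ≤ exp (s - 1) ^ n := pow_le_pow_left₀ hs hs_le n
    _ = exp (n * (s - 1)) := (exp_nat_mul _ n).symm
    _ ≤ exp (1 + -((n + 1) * (1 - s))) := exp_le_exp.mpr (by linarith)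
    _ = exp 1 * exp (-((n + 1) * (1 - s))) := exp_add _ _

lemma integral_rpow_mul_exp_neg_mul_le {a r b : ℝ} (ha : -1 < a) (hr : 0 < r) (hb : 0 ≤ b) :
    ∫ u in (0 : ℝ)..b, u ^ a * exp (-(r * u)) ≤ (1 / r) ^ (a + 1) * Gamma (a + 1) := by
  have hΓ := integral_rpow_mul_exp_neg_mul_Ioi (neg_lt_iff_pos_add.mp ha) hr
  rw [add_sub_cancel_right] at hΓ
  -- integrable, as a non-integrable function would have integral `0`
  have hint : IntegrableOn (fun u => u ^ a * exp (-(r * u))) (Ioi 0) :=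
    Integrable.of_integral_ne_zero <| hΓ ▸
      (mul_pos (by positivity) (Gamma_pos_of_pos (by linarith))).ne'
  rw [intervalIntegral.integral_of_le hb, ← hΓ]
  refine setIntegral_mono_set hint ?_ Ioc_subset_Ioi_self.eventuallyLE
  exact (ae_restrict_iff' measurableSet_Ioi).2 (ae_of_all _ fun u hu =>
    mul_nonneg (rpow_nonneg (le_of_lt hu) _) (exp_nonneg _))

lemma continuous_const_sub_rpow {a : ℝ} (ha : 0 ≤ a) (c : ℝ) :
    Continuous fun t : ℝ => (c - t) ^ a :=
  (continuous_const.sub continuous_id).rpow_const fun _ => Or.inr ha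

lemma integral_pow_mul_one_sub_rpow_ge {a : ℝ} (ha : 0 ≤ a) (n : ℕ) :
    exp (-1) / (a + 1) * ((n : ℝ) + 1) ^ (-(a + 1))
      ≤ ∫ s in (0 : ℝ)..1, s ^ n * (1 - s) ^ a := by
  set c : ℝ := 1 - ((n : ℝ) + 1)⁻¹
  have hc0 : 0 ≤ c := sub_nonneg.mpr (inv_le_one_of_one_le₀ (by simp))
  have hc1 : c ≤ 1 := sub_le_self _ (by positivity)
  have htail : ∫ s in c..1, (1 - s) ^ a = ((n : ℝ) + 1) ^ (-(a + 1)) / (a + 1) := by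
    rw [intervalIntegral.integral_comp_sub_left (fun x => x ^ a), sub_self,
      integral_rpow (Or.inl (by linarith)), zero_rpow (by linarith), sub_zero, sub_sub_cancel,
      inv_rpow (by positivity), rpow_neg (by positivity)]
  have hpt : ∀ s ∈ Icc c 1, exp (-1) * (1 - s) ^ a ≤ s ^ n * (1 - s) ^ a := fun s hs =>
    mul_le_mul_of_nonneg_right ((exp_neg_one_le_one_sub_inv_pow n).trans
      (pow_le_pow_left₀ hc0 hs.1 n)) (rpow_nonneg (sub_nonneg.mpr hs.2) _)
  have hf : Continuous fun s : ℝ => s ^ n * (1 - s) ^ a :=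
    (continuous_pow n).mul (continuous_const_sub_rpow ha 1)
  calc exp (-1) / (a + 1) * ((n : ℝ) + 1) ^ (-(a + 1))
      = ∫ s in c..1, exp (-1) * (1 - s) ^ a := by
        rw [intervalIntegral.integral_const_mul, htail]; ring
    _ ≤ ∫ s in c..1, s ^ n * (1 - s) ^ a :=
        intervalIntegral.integral_mono_on hc1
          (((continuous_const_sub_rpow ha 1).const_mul _).intervalIntegrable _ _)
          (hf.intervalIntegrable _ _) hpt
    _ ≤ ∫ s in (0 : ℝ)..1, s ^ n * (1 - s) ^ a := by
        refine intervalIntegral.integral_mono_interval hc0 hc1 le_rfl ?_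
          (hf.intervalIntegrable _ _)
        exact (ae_restrict_iff' measurableSet_Ioc).2 (ae_of_all _ fun s hs =>
          mul_nonneg (pow_nonneg hs.1.le n) (rpow_nonneg (sub_nonneg.mpr hs.2) _))

lemma integral_pow_mul_one_sub_rpow_le {a : ℝ} (ha : 0 ≤ a) (n : ℕ) :
    ∫ s in (0 : ℝ)..1, s ^ n * (1 - s) ^ a
      ≤ exp 1 * Gamma (a + 1) * ((n : ℝ) + 1) ^ (-(a + 1)) := by
  have hn : (0 : ℝ) < n + 1 := by positivity
  have hpt : ∀ s ∈ Icc (0 : ℝ) 1,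
      s ^ n * (1 - s) ^ a ≤ exp 1 * ((1 - s) ^ a * exp (-((n + 1) * (1 - s)))) := fun s hs => by
    rw [mul_comm ((1 - s) ^ a), ← mul_assoc]
    exact mul_le_mul_of_nonneg_right (pow_le_exp_one_mul_exp_neg n hs.1)
      (rpow_nonneg (sub_nonneg.mpr hs.2) _)
  have hg : Continuous fun s : ℝ => exp 1 * ((1 - s) ^ a * exp (-((n + 1) * (1 - s)))) := by
    fun_prop (disch := exact ha)
  calc ∫ s in (0 : ℝ)..1, s ^ n * (1 - s) ^ a
      ≤ ∫ s in (0 : ℝ)..1, exp 1 * ((1 - s) ^ a * exp (-((n + 1) * (1 - s)))) :=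
        intervalIntegral.integral_mono_on zero_le_one
          (((continuous_pow n).mul (continuous_const_sub_rpow ha 1)).intervalIntegrable _ _)
          (hg.intervalIntegrable _ _) hpt
    _ = exp 1 * ∫ u in (0 : ℝ)..1, u ^ a * exp (-((n + 1) * u)) := by
        rw [intervalIntegral.integral_const_mul,
          intervalIntegral.integral_comp_sub_left (fun u => u ^ a * exp (-((n + 1) * u))),
          sub_self, sub_zero]
    _ ≤ exp 1 * ((1 / ((n : ℝ) + 1)) ^ (a + 1) * Gamma (a + 1)) := by
        gcongr
        exact integral_rpow_mul_exp_neg_mul_le (by linarith) hn zero_le_one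
    _ = exp 1 * Gamma (a + 1) * ((n : ℝ) + 1) ^ (-(a + 1)) := by
        rw [one_div, inv_rpow hn.le, rpow_neg hn.le]; ring

lemma integral_pow_mul_sub_rpow {a γ : ℝ} (hγ : 0 < γ) (n : ℕ) :
    ∫ t in (0 : ℝ)..γ, t ^ n * (γ - t) ^ a
      = γ ^ (n + 1) * γ ^ a * ∫ s in (0 : ℝ)..1, s ^ n * (1 - s) ^ a := by
  have h := intervalIntegral.integral_comp_mul_left (fun t => t ^ n * (γ - t) ^ a)
    (a := 0) (b := 1) hγ.ne'
  rw [mul_zero, mul_one, smul_eq_mul, eq_inv_mul_iff_mul_eq₀ hγ.ne'] at h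
  have hscale : ∫ s in (0 : ℝ)..1, (γ * s) ^ n * (γ - γ * s) ^ a
      = γ ^ n * γ ^ a * ∫ s in (0 : ℝ)..1, s ^ n * (1 - s) ^ a := by
    rw [← intervalIntegral.integral_const_mul]
    refine intervalIntegral.integral_congr fun s hs => ?_
    rw [uIcc_of_le zero_le_one] at hs
    rw [← mul_one_sub, mul_pow, mul_rpow hγ.le (sub_nonneg.mpr hs.2)]
    ring
  rw [← h, hscale]
  ring

section
variable {a γ : ℝ}

lemma intervalIntegrable_pow_mul_rpow_div_one_sub (ha : 0 ≤ a) (hγ : γ < 1) (n : ℕ) :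
    IntervalIntegrable (fun t => t ^ n * ((γ - t) / (1 - t)) ^ a) volume 0 γ := by
  refine ContinuousOn.intervalIntegrable ?_
  refine (continuous_pow n).continuousOn.mul (ContinuousOn.rpow_const ?_ fun _ _ => Or.inr ha)
  refine (continuousOn_const.sub continuousOn_id).div
    (continuousOn_const.sub continuousOn_id) ?_
  exact fun t ht => (sub_pos.mpr (ht.2.trans_lt (max_lt one_pos hγ))).ne'

lemma integral_pow_mul_sub_rpow_le (ha : 0 ≤ a) (hγ0 : 0 ≤ γ) (hγ1 : γ < 1) (n : ℕ) :
    ∫ t in (0 : ℝ)..γ, t ^ n * (γ - t) ^ a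
      ≤ ∫ t in (0 : ℝ)..γ, t ^ n * ((γ - t) / (1 - t)) ^ a := by
  refine intervalIntegral.integral_mono_on hγ0
    (((continuous_pow n).mul (continuous_const_sub_rpow ha γ)).intervalIntegrable _ _)
    (intervalIntegrable_pow_mul_rpow_div_one_sub ha hγ1 n) fun t ht => ?_
  have hγt : 0 ≤ γ - t := sub_nonneg.mpr ht.2
  exact mul_le_mul_of_nonneg_left (rpow_le_rpow hγt
    (le_div_self hγt (by linarith [ht.2]) (by linarith [ht.1])) ha) (pow_nonneg ht.1 n)

lemma integral_pow_mul_rpow_div_one_sub_le (ha : 0 ≤ a) (hγ0 : 0 ≤ γ) (hγ1 : γ < 1) (n : ℕ) :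
    ∫ t in (0 : ℝ)..γ, t ^ n * ((γ - t) / (1 - t)) ^ a
      ≤ (1 - γ) ^ (-a) * ∫ t in (0 : ℝ)..γ, t ^ n * (γ - t) ^ a := by
  rw [← intervalIntegral.integral_const_mul]
  refine intervalIntegral.integral_mono_on hγ0
    (intervalIntegrable_pow_mul_rpow_div_one_sub ha hγ1 n)
    ((((continuous_pow n).mul (continuous_const_sub_rpow ha γ)).const_mul _).intervalIntegrable
      _ _) fun t ht => ?_
  have hγt : 0 ≤ γ - t := sub_nonneg.mpr ht.2
  have h1γ : 0 < 1 - γ := sub_pos.mpr hγ1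
  calc t ^ n * ((γ - t) / (1 - t)) ^ a ≤ t ^ n * ((γ - t) / (1 - γ)) ^ a :=
        mul_le_mul_of_nonneg_left (rpow_le_rpow (div_nonneg hγt (by linarith))
          (div_le_div_of_nonneg_left hγt h1γ (by linarith)) ha) (pow_nonneg ht.1 n)
    _ = (1 - γ) ^ (-a) * (t ^ n * (γ - t) ^ a) := by
        rw [div_rpow hγt h1γ.le, rpow_neg h1γ.le]; ring

end

theorem u_two_order (β γ : ℝ) (hβ : β < -1) (hγ0 : 0 < γ) (hγ1 : γ < 1) :
    ∃ c₁ c₂ : ℝ, 0 < c₁ ∧ c₁ ≤ c₂ ∧ ∀ k : ℕ, 1 ≤ k →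
      c₁ * γ ^ (k : ℝ) * (k : ℝ) ^ (-1 + β) ≤
        (∫ t in (0:ℝ)..γ, t ^ (k - 1) * ((γ - t) / (1 - t)) ^ (-β)) ∧
      (∫ t in (0:ℝ)..γ, t ^ (k - 1) * ((γ - t) / (1 - t)) ^ (-β)) ≤
        c₂ * γ ^ (k : ℝ) * (k : ℝ) ^ (-1 + β) := by
  obtain ⟨a, rfl⟩ : ∃ a : ℝ, β = -a := ⟨-β, (neg_neg β).symm⟩
  have ha : 0 ≤ a := by linarith
  have bounds : ∀ k : ℕ, 1 ≤ k →
      γ ^ a * (exp (-1) / (a + 1)) * γ ^ (k : ℝ) * (k : ℝ) ^ (-1 + -a) ≤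
        (∫ t in (0:ℝ)..γ, t ^ (k - 1) * ((γ - t) / (1 - t)) ^ (-(-a))) ∧
      (∫ t in (0:ℝ)..γ, t ^ (k - 1) * ((γ - t) / (1 - t)) ^ (-(-a))) ≤
        (1 - γ) ^ (-a) * γ ^ a * (exp 1 * Gamma (a + 1)) * γ ^ (k : ℝ) *
          (k : ℝ) ^ (-1 + -a) := by
    intro k hk
    obtain ⟨n, rfl⟩ := Nat.exists_eq_add_of_le' hk
    have hsub := integral_pow_mul_sub_rpow (a := a) hγ0 n
    rw [neg_neg, Nat.add_sub_cancel, rpow_natCast, Nat.cast_add_one,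
      show -1 + -a = -(a + 1) by ring]
    constructor
    · calc γ ^ a * (exp (-1) / (a + 1)) * γ ^ (n + 1) * ((n : ℝ) + 1) ^ (-(a + 1))
          = γ ^ (n + 1) * γ ^ a * (exp (-1) / (a + 1) * ((n : ℝ) + 1) ^ (-(a + 1))) := by ring
        _ ≤ ∫ t in (0 : ℝ)..γ, t ^ n * (γ - t) ^ a := by
          rw [hsub]; gcongr; exact integral_pow_mul_one_sub_rpow_ge ha n
        _ ≤ _ := integral_pow_mul_sub_rpow_le ha hγ0.le hγ1 n
    · calc _ ≤ (1 - γ) ^ (-a) * ∫ t in (0 : ℝ)..γ, t ^ n * (γ - t) ^ a :=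
            integral_pow_mul_rpow_div_one_sub_le ha hγ0.le hγ1 n
        _ ≤ (1 - γ) ^ (-a) * (γ ^ (n + 1) * γ ^ a *
              (exp 1 * Gamma (a + 1) * ((n : ℝ) + 1) ^ (-(a + 1)))) := by
          rw [hsub]; gcongr; exact integral_pow_mul_one_sub_rpow_le ha n
        _ = _ := by ring
  refine ⟨_, _, by positivity, ?_, bounds⟩
  obtain ⟨h₁, h₂⟩ := bounds 1 le_rfl
  simp only [Nat.cast_one, rpow_one, one_rpow, mul_one] at h₁ h₂
  exact le_of_mul_le_mul_right (h₁.trans h₂) hγ0
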